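/- For n ≥ 2, the number of rational knots with crossing number n, RK(n) = (1/3)(2^{n-2} + ((-1)^{n+1}+1)/2 · 2^{(n-1)/2} + ((-1)^{n+1}-1)/2 + 1 - (-1)^{⌊n/2⌋ n}), plus the number of oriented rational links with crossing number n, RL(n) = (1/3)(2^{n-2} + 2(-1)^n) + ((-1)^n+1)/2 · 2^{(n-2)/2}, equals Σ_{s=2}^{n} R(n,s) + Σ_{s=2}^{n} RS(n,s), the total count of R-decompositions (counting symmetric type III ones twice). -/

import Mathlib

open Finset

/-- The number `R(n,s)` of type I/III R-decompositions with `n` crossings and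
`s` Seifert circles, given by the explicit binomial sum. Note that in natural
number arithmetic `⌈(s-1)/2⌉ = s/2`, `⌊(s-1)/2⌋ = (s-1)/2`, `⌊(s+1)/2⌋ = (s+1)/2`,
and `((-1)^s+1)/2` is `1` if `s` is even and `0` otherwise. -/
def Rcount (n s : ℕ) : ℕ :=
  ∑ j ∈ Finset.Icc 1 (min (s / 2) (n / 2 - (s - 1) / 2)),
    Nat.choose (j + (s - 1) / 2 - 1) (2 * j - (if Even s then 1 else 0) - 1) *
      Nat.choose (n - j - (s + 1) / 2) (j + (s - 1) / 2 - 1)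

/-- The number `RS(n,s)` of symmetric type III R-decompositions with `n` crossings
and `s` Seifert circles; it is `0` for odd `s`, and for `s = 2k` it is given by the
explicit binomial sum, where the indicator `((-1)^{(j+k)n}+1)/2` is `1` exactly when
`(j+k)*n` is even. Note `⌈(j+k)/2⌉ = (j+k+1)/2` in natural number arithmetic. -/
def RScount (n s : ℕ) : ℕ :=
  if Even s then
    ∑ j ∈ Finset.Icc 1 (min (s / 2) (n / 2 + 1 - s / 2)),
      (if Even ((j + s / 2) * n) then 1 else 0) *
        (Nat.choose ((j + s / 2) / 2 - 1) (j - 1) *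
          Nat.choose (n / 2 - (j + s / 2 + 1) / 2) ((j + s / 2) / 2 - 1))
  else 0

/-! Both sides are Jacobsthal numbers in disguise: `J (m + 2) = J (m + 1) + 2 J m`, so that
`3 J m = 2^m - (-1)^m` and `J m = ∑ₖ 2^k C(m-1-k, k)`. In `R(n,s)` put
`u = j + ⌊(s-1)/2⌋ - 1` and `i = 2j - [s even] - 1`; this is a bijection onto
`0 ≤ i ≤ u < ⌊n/2⌋` (inverse `s = 2u + 2 - i`, `j = ⌊i/2⌋ + 1`) turning the summand into
`C(u,i) C(n-2-u,u)`, so the row sum over `i` gives `∑ₛ R(n,s) = ∑ᵤ 2^u C(n-2-u,u) = J(n-1)`.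
In `RS(n,2k)` the substitution `t = j + k` likewise makes the first binomial run over a full
row, and splitting `t` by parity gives `∑ₛ RS(n,s) = J⌊n/2⌋ + [n even] J(⌊n/2⌋-1)`. -/

def jacobsthal : ℕ → ℕ
  | 0 => 0
  | 1 => 1
  | n + 2 => jacobsthal (n + 1) + 2 * jacobsthal n

theorem jacobsthal_add_two (n : ℕ) :
    jacobsthal (n + 2) = jacobsthal (n + 1) + 2 * jacobsthal n := rfl

theorem three_mul_jacobsthal : ∀ n : ℕ, 3 * (jacobsthal n : ℤ) = 2 ^ n - (-1) ^ n
  | 0 => by simp [jacobsthal]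
  | 1 => by simp [jacobsthal]
  | n + 2 => by
    rw [jacobsthal_add_two]
    push_cast
    linear_combination three_mul_jacobsthal (n + 1) + 2 * three_mul_jacobsthal n

theorem jacobsthal_succ_eq_sum_antidiagonal :
    ∀ n : ℕ, jacobsthal (n + 1) = ∑ p ∈ antidiagonal n, 2 ^ p.2 * p.1.choose p.2 :=
  Nat.twoStepInduction rfl rfl fun n h1 h2 => by
    rw [jacobsthal_add_two, h1, h2, Nat.antidiagonal_succ_succ', Nat.antidiagonal_succ',
      sum_cons, sum_cons, sum_cons, sum_map, sum_map, mul_sum, add_assoc, ← sum_add_distrib]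
    simp only [Function.Embedding.coe_prodMap, Function.Embedding.coeFn_mk, Prod.map_fst,
      Prod.map_snd, Function.Embedding.refl_apply, Nat.choose_succ_succ, Nat.choose_zero_right,
      Nat.choose_zero_succ, pow_succ, pow_zero, mul_zero, zero_add, Nat.add_left_cancel_iff]
    exact sum_congr rfl fun p _ => by ring

theorem jacobsthal_eq_sum_range (n : ℕ) :
    jacobsthal n = ∑ k ∈ range ((n + 1) / 2), 2 ^ k * (n - 1 - k).choose k := by
  rcases n with _ | n
  · rfl
  rw [jacobsthal_succ_eq_sum_antidiagonal, ← Nat.sum_antidiagonal_swap]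
  simp only [Prod.fst_swap, Prod.snd_swap]
  rw [Nat.sum_antidiagonal_eq_sum_range_succ (fun i j => 2 ^ i * j.choose i)]
  refine (sum_subset (range_subset_range.2 (by omega)) fun k hk hk' => ?_).symm
  simp only [mem_range] at hk hk'
  rw [Nat.choose_eq_zero_of_lt (by omega), mul_zero]

theorem sum_Icc_two_eq_sum_even_add_sum_odd {M : Type*} [AddCommMonoid M] (f : ℕ → M)
    (L : ℕ) : ∑ t ∈ Icc 2 L, f t =
      ∑ w ∈ range (L / 2), f (2 * w + 2) + ∑ w ∈ range ((L - 1) / 2), f (2 * w + 3) := by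
  rw [← sum_filter_add_sum_filter_not _ Even]
  congr 1
  · refine sum_nbij' (fun t => t / 2 - 1) (fun w => 2 * w + 2) ?_ ?_ ?_ ?_ ?_ <;>
      simp only [mem_filter, mem_Icc, mem_range, Nat.even_iff] <;> intros <;>
      (try congr 1) <;> omega
  · refine sum_nbij' (fun t => t / 2 - 1) (fun w => 2 * w + 3) ?_ ?_ ?_ ?_ ?_ <;>
      simp only [mem_filter, mem_Icc, mem_range, Nat.even_iff] <;> intros <;>
      (try congr 1) <;> omega

theorem sum_Rcount_eq_sum_range (n : ℕ) :
    ∑ s ∈ Icc 2 n, Rcount n s = ∑ u ∈ range (n / 2), 2 ^ u * (n - 2 - u).choose u := by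
  have indicator_even : ∀ s, (if Even s then 1 else 0) = 1 - s % 2 := fun s => by
    split_ifs with h <;> rw [Nat.even_iff] at * <;> omega
  simp only [Rcount, indicator_even, ← Nat.sum_range_choose, sum_mul]
  rw [sum_sigma', sum_sigma']
  refine sum_nbij' (fun x => ⟨x.2 + (x.1 - 1) / 2 - 1, 2 * x.2 - (1 - x.1 % 2) - 1⟩)
    (fun y => ⟨2 * y.1 + 2 - y.2, y.2 / 2 + 1⟩) ?_ ?_ ?_ ?_ ?_
  all_goals rintro ⟨a, b⟩ h
  all_goals simp only [mem_sigma, mem_Icc, mem_range] at h ⊢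
  · omega
  · omega
  · simp only [Sigma.mk.injEq, heq_eq_eq]; omega
  · simp only [Sigma.mk.injEq, heq_eq_eq]; omega
  · congr 2; omega

theorem sum_Rcount_eq_jacobsthal (n : ℕ) :
    ∑ s ∈ Icc 2 n, Rcount n s = jacobsthal (n - 1) := by
  rw [sum_Rcount_eq_sum_range, jacobsthal_eq_sum_range, show (n - 1 + 1) / 2 = n / 2 by omega]
  exact sum_congr rfl fun u _ => by rw [Nat.sub_sub n 1 1]

theorem sum_RScount_eq_sum_Icc (n : ℕ) :
    ∑ s ∈ Icc 2 n, RScount n s = ∑ t ∈ Icc 2 (n / 2 + 1), (if Even (t * n) then 1 else 0) *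
      (2 ^ (t / 2 - 1) * (n / 2 - (t + 1) / 2).choose (t / 2 - 1)) := by
  have row : ∀ t ∈ Icc 2 (n / 2 + 1), (if Even (t * n) then 1 else 0) *
        (2 ^ (t / 2 - 1) * (n / 2 - (t + 1) / 2).choose (t / 2 - 1)) =
      ∑ i ∈ range (t / 2), (if Even (t * n) then 1 else 0) *
        ((t / 2 - 1).choose i * (n / 2 - (t + 1) / 2).choose (t / 2 - 1)) := fun t ht => by
    rw [mem_Icc] at ht
    rw [← mul_sum, ← sum_mul, ← Nat.sum_range_choose, Nat.sub_add_cancel (by omega)]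
  rw [sum_congr rfl row]
  simp only [RScount, ← sum_filter]
  rw [sum_sigma', sum_sigma']
  refine sum_nbij' (fun x => ⟨x.2 + x.1 / 2, x.2 - 1⟩)
    (fun y => ⟨2 * (y.1 - y.2 - 1), y.2 + 1⟩) ?_ ?_ ?_ ?_ ?_
  all_goals rintro ⟨a, b⟩ h
  all_goals simp only [mem_sigma, mem_filter, mem_Icc, mem_range, Nat.even_iff] at h ⊢
  · omega
  · omega
  · simp only [Sigma.mk.injEq, heq_eq_eq]; omega
  · simp only [Sigma.mk.injEq, heq_eq_eq]; omega

theorem sum_RScount_eq_jacobsthal (n : ℕ) :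
    ∑ s ∈ Icc 2 n, RScount n s =
      jacobsthal (n / 2) + if Even n then jacobsthal (n / 2 - 1) else 0 := by
  rw [sum_RScount_eq_sum_Icc, sum_Icc_two_eq_sum_even_add_sum_odd, jacobsthal_eq_sum_range,
    jacobsthal_eq_sum_range, show (n / 2 + 1 - 1) / 2 = (n / 2 - 1 + 1) / 2 by omega]
  congr 1
  · refine sum_congr rfl fun w _ => ?_
    rw [if_pos (Nat.even_mul.2 (Or.inl ⟨w + 1, by ring⟩)), one_mul,
      show (2 * w + 2) / 2 - 1 = w by omega,
      show n / 2 - (2 * w + 2 + 1) / 2 = n / 2 - 1 - w by omega]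
  · have odd_mul : ∀ w, Even ((2 * w + 3) * n) ↔ Even n := fun w => by
      simp [Nat.even_mul, Nat.even_add_one, parity_simps]
    split_ifs with he
    · refine sum_congr rfl fun w _ => ?_
      rw [if_pos ((odd_mul w).2 he), one_mul, show (2 * w + 3) / 2 - 1 = w by omega,
        show n / 2 - (2 * w + 3 + 1) / 2 = n / 2 - 1 - 1 - w by omega]
    · exact sum_eq_zero fun w _ => by rw [if_neg (mt (odd_mul w).1 he), zero_mul]

/-- For `n ≥ 2`, the number of rational knots with crossing number `n`,
`RK(n) = (1/3)(2^(n-2) + ((-1)^(n+1)+1)/2·2^((n-1)/2) + ((-1)^(n+1)-1)/2 + 1 - (-1)^(⌊n/2⌋n))`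
(the term `2^((n-1)/2)` occurring only for odd `n`, where `((-1)^(n+1)+1)/2 = 1`, and
`((-1)^(n+1)-1)/2` being `-1` for even `n` and `0` for odd `n`), plus the number of
oriented rational links with crossing number `n`,
`RL(n) = (1/3)(2^(n-2) + 2(-1)^n) + ((-1)^n+1)/2·2^((n-2)/2)`
(the term `2^((n-2)/2)` occurring only for even `n`), equals
`Σ_{s=2}^n R(n,s) + Σ_{s=2}^n RS(n,s)`. The identity is stated multiplied by `3`. -/
theorem RK_add_RL_eq_total (n : ℕ) (hn : 2 ≤ n) :
    ((2 : ℤ) ^ (n - 2) + (if Odd n then 2 ^ ((n - 1) / 2) else 0) +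
        (if Odd n then 0 else -1) + 1 - (-1) ^ ((n / 2) * n)) +
      ((2 : ℤ) ^ (n - 2) + 2 * (-1) ^ n + 3 * (if Even n then 2 ^ ((n - 2) / 2) else 0)) =
    3 * ((∑ s ∈ Finset.Icc 2 n, Rcount n s) + (∑ s ∈ Finset.Icc 2 n, RScount n s)) := by
  rw [sum_Rcount_eq_jacobsthal, sum_RScount_eq_jacobsthal]
  obtain ⟨h, rfl | rfl⟩ : ∃ h, n = 2 * h + 2 ∨ n = 2 * h + 3 := ⟨(n - 2) / 2, by omega⟩
  · have hev : Even (2 * h + 2) := ⟨h + 1, by ring⟩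
    have hJ := three_mul_jacobsthal (2 * h + 1)
    rw [Odd.neg_one_pow ⟨h, rfl⟩] at hJ
    rw [if_neg (Nat.not_odd_iff_even.2 hev), if_neg (Nat.not_odd_iff_even.2 hev), if_pos hev,
      if_pos hev, Even.neg_one_pow (hev.mul_left _), Even.neg_one_pow hev,
      show (2 * h + 2) / 2 = h + 1 by omega, show (2 * h + 2 - 2) / 2 = h by omega,
      show 2 * h + 2 - 1 = 2 * h + 1 by omega, show 2 * h + 2 - 2 = 2 * h by omega,
      Nat.add_sub_cancel]
    push_cast
    linear_combination -hJ - three_mul_jacobsthal (h + 1) - three_mul_jacobsthal h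
  · have hodd : Odd (2 * h + 3) := ⟨h + 1, by ring⟩
    have hsign : (-1 : ℤ) ^ ((h + 1) * (2 * h + 3)) = (-1) ^ (h + 1) := by
      rw [show (h + 1) * (2 * h + 3) = (h + 1) + 2 * ((h + 1) * (h + 1)) by ring, pow_add,
        pow_mul, neg_one_sq, one_pow, mul_one]
    have hJ := three_mul_jacobsthal (2 * h + 2)
    rw [Even.neg_one_pow ⟨h + 1, by ring⟩] at hJ
    rw [if_pos hodd, if_pos hodd, if_neg (Nat.not_even_iff_odd.2 hodd),
      if_neg (Nat.not_even_iff_odd.2 hodd), Odd.neg_one_pow hodd,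
      show (2 * h + 3) / 2 = h + 1 by omega, show (2 * h + 3 - 1) / 2 = h + 1 by omega,
      show 2 * h + 3 - 1 = 2 * h + 2 by omega, show 2 * h + 3 - 2 = 2 * h + 1 by omega, hsign]
    push_cast
    linear_combination -hJ - three_mul_jacobsthal (h + 1)
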